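/- Let F be a distribution on [-c,∞) for some c ≥ 0 such that m(F) = ∫ e^{γy} F(dy) < ∞ and F^{*2} ∈ L(γ) for some γ ≥ 0. If F ∈ OS, then a(F) := limsup_{k→∞} limsup_{x→∞} ∫_{(k, x-k]} F̄(x-y) F(dy) / (F^{*2})̄(x) < 1. -/

import Mathlib

open MeasureTheory Filter Set Asymptotics

/-- The tail `F̄(x) = μ((x,∞))` of a distribution `μ` on `ℝ`. -/
noncomputable def tail (μ : MeasureTheory.Measure ℝ) (x : ℝ) : ℝ := (μ (Set.Ioi x)).toReal

/-- Convolution of two distributions on `ℝ`. -/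
noncomputable def mconv (μ ν : MeasureTheory.Measure ℝ) : MeasureTheory.Measure ℝ :=
  MeasureTheory.Measure.map (fun p : ℝ × ℝ => p.1 + p.2) (μ.prod ν)

/-- `iconv μ k` is the `k`-fold convolution `μ^{*k}` (with `μ^{*0} = δ₀`). -/
noncomputable def iconv (μ : MeasureTheory.Measure ℝ) : ℕ → MeasureTheory.Measure ℝ
  | 0 => MeasureTheory.Measure.dirac 0
  | n + 1 => mconv (iconv μ n) μ

/-- The class `L(γ)`: `F̄(x-t) ~ e^{γt} F̄(x)` as `x → ∞`, for every `t`. -/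
def MemL (γ : ℝ) (μ : MeasureTheory.Measure ℝ) : Prop :=
  ∀ t : ℝ, Filter.Tendsto (fun x => tail μ (x - t) / tail μ x) Filter.atTop
    (nhds (Real.exp (γ * t)))

/-- The class `OS`: `limsup_{x→∞} (F*F)̄(x) / F̄(x) < ∞`. -/
def MemOS (μ : MeasureTheory.Measure ℝ) : Prop :=
  Filter.IsBoundedUnder (· ≤ ·) Filter.atTop (fun x => tail (mconv μ μ) x / tail μ x)

/-!
The numerator is the part over `(k, x - k]` of `∫ F̄(x - y) F(dy) = (F * F)̄(x)`, so it is at most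
`(F * F)̄(x)` minus the part over `(-∞, k]`; as `F` lives on `[-c, ∞)`, that part is at least
`F̄(x + c) F(-∞, k]`. By `OS` and `L(γ)`, `F̄(x + c) ≥ δ (F * F)̄(x)` for large `x`, so the ratio is
eventually at most `1 - δ / 2` as soon as `F(-∞, k] ≥ 1 / 2`.
-/

section Tail

variable {μ ν : Measure ℝ}

-- `mconv` is definitionally Mathlib's additive convolution `μ ∗ ν`.
instance [IsFiniteMeasure μ] [IsFiniteMeasure ν] : IsFiniteMeasure (mconv μ ν) :=
  inferInstanceAs (IsFiniteMeasure (μ ∗ ν))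

lemma tail_nonneg (x : ℝ) : 0 ≤ tail μ x := ENNReal.toReal_nonneg

lemma tail_antitone [IsFiniteMeasure μ] : Antitone (tail μ) := fun _ _ hab =>
  ENNReal.toReal_mono (measure_ne_top μ _) (measure_mono (Ioi_subset_Ioi hab))

lemma tail_le_measureReal_univ [IsFiniteMeasure μ] (x : ℝ) : tail μ x ≤ μ.real univ :=
  measureReal_mono (subset_univ _)

lemma integrable_tail_sub [IsFiniteMeasure μ] [IsFiniteMeasure ν] (x : ℝ) :
    Integrable (fun y => tail ν (x - y)) μ :=
  .of_bound (tail_antitone.measurable.comp (by fun_prop)).aestronglyMeasurable (ν.real univ)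
    (.of_forall fun y => by
      rw [Real.norm_of_nonneg (tail_nonneg _)]
      exact tail_le_measureReal_univ _)

lemma mconv_apply_Ioi [SFinite ν] (x : ℝ) :
    mconv μ ν (Ioi x) = ∫⁻ y, ν (Ioi (x - y)) ∂μ := by
  rw [mconv, Measure.map_apply (by fun_prop) measurableSet_Ioi,
    Measure.prod_apply (measurableSet_Ioi.preimage (by fun_prop))]
  refine lintegral_congr fun y => congrArg ν ?_
  ext z
  simp [sub_lt_iff_lt_add']

lemma mconv_Ioi_add_le [IsProbabilityMeasure μ] [IsProbabilityMeasure ν] (a b : ℝ) :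
    mconv μ ν (Ioi (a + b)) ≤ μ (Ioi a) + ν (Ioi b) := by
  rw [mconv_apply_Ioi]
  calc ∫⁻ y, ν (Ioi (a + b - y)) ∂μ
      ≤ ∫⁻ y, (Ioi a).indicator 1 y + ν (Ioi b) ∂μ := lintegral_mono fun y => by
        by_cases hy : y ∈ Ioi a
        · simpa [hy] using prob_le_one.trans le_self_add
        · simp only [indicator_of_notMem hy, zero_add]
          rw [mem_Ioi, not_lt] at hy
          exact measure_mono (Ioi_subset_Ioi (by linarith))
    _ = μ (Ioi a) + ν (Ioi b) := by
        rw [lintegral_add_right _ measurable_const, lintegral_indicator_one measurableSet_Ioi]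
        simp

lemma tail_mconv_add_le [IsProbabilityMeasure μ] [IsProbabilityMeasure ν] (a b : ℝ) :
    tail (mconv μ ν) (a + b) ≤ tail μ a + tail ν b := by
  rw [tail, tail, tail, ← ENNReal.toReal_add (measure_ne_top _ _) (measure_ne_top _ _)]
  exact ENNReal.toReal_mono (by finiteness) (mconv_Ioi_add_le a b)

lemma setIntegral_tail_sub_le_tail_mconv [IsFiniteMeasure μ] [IsFiniteMeasure ν]
    (s : Set ℝ) (x : ℝ) : ∫ y in s, tail ν (x - y) ∂μ ≤ tail (mconv μ ν) x := by
  have hmeas : Measurable fun z => ν (Ioi z) :=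
    Antitone.measurable fun _ _ h => measure_mono (Ioi_subset_Ioi h)
  rw [tail, mconv_apply_Ioi, ← integral_toReal (f := fun y => ν (Ioi (x - y)))
    (hmeas.comp (by fun_prop)).aemeasurable (.of_forall fun _ => measure_lt_top _ _)]
  exact setIntegral_le_integral (integrable_tail_sub x) (.of_forall fun _ => tail_nonneg _)

lemma tail_add_mul_measureReal_le_setIntegral_tail_sub [IsFiniteMeasure μ] [IsFiniteMeasure ν]
    {c : ℝ} (hμ : μ (Iio (-c)) = 0) (s : Set ℝ) (x : ℝ) :
    tail ν (x + c) * μ.real s ≤ ∫ y in s, tail ν (x - y) ∂μ := by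
  have hge : ∀ᵐ y ∂μ.restrict s, tail ν (x + c) ≤ tail ν (x - y) := by
    refine ae_restrict_of_ae (measure_eq_zero_iff_ae_notMem.mp hμ |>.mono fun y hy => ?_)
    rw [mem_Iio, not_lt] at hy
    exact tail_antitone (by linarith)
  calc tail ν (x + c) * μ.real s = ∫ _ in s, tail ν (x + c) ∂μ := by
        rw [setIntegral_const, smul_eq_mul, mul_comm]
    _ ≤ ∫ y in s, tail ν (x - y) ∂μ :=
        integral_mono_ae (integrable_const _) (integrable_tail_sub x).integrableOn hge

lemma setIntegral_Ioc_tail_sub_le [IsFiniteMeasure μ] [IsFiniteMeasure ν]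
    {c : ℝ} (hμ : μ (Iio (-c)) = 0) (k x : ℝ) :
    ∫ y in Ioc k (x - k), tail ν (x - y) ∂μ ≤
      tail (mconv μ ν) x - tail ν (x + c) * μ.real (Iic k) := by
  have hsplit : ∫ y in Iic k ∪ Ioc k (x - k), tail ν (x - y) ∂μ =
      ∫ y in Iic k, tail ν (x - y) ∂μ + ∫ y in Ioc k (x - k), tail ν (x - y) ∂μ :=
    setIntegral_union (Iic_disjoint_Ioc le_rfl) measurableSet_Ioc
      (integrable_tail_sub x).integrableOn (integrable_tail_sub x).integrableOn
  linarith [setIntegral_tail_sub_le_tail_mconv (μ := μ) (ν := ν) (Iic k ∪ Ioc k (x - k)) x,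
    tail_add_mul_measureReal_le_setIntegral_tail_sub (ν := ν) hμ (Iic k) x]

lemma MemL.tail_pos [IsFiniteMeasure μ] {γ : ℝ} (h : MemL γ μ) (x : ℝ) : 0 < tail μ x := by
  refine (tail_nonneg x).lt_of_ne fun hx => ?_
  have hzero : Tendsto (fun y => tail μ (y - 0) / tail μ y) atTop (nhds 0) :=
    tendsto_const_nhds.congr' <| (eventually_ge_atTop x).mono fun y hy => by
      simp [le_antisymm (hx ▸ tail_antitone hy) (tail_nonneg y)]
  simpa using tendsto_nhds_unique (h 0) hzero

lemma MemL.exists_pos_eventually_mul_tail_le [IsFiniteMeasure μ] {γ : ℝ} (h : MemL γ μ)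
    (t : ℝ) : ∃ a > 0, ∀ᶠ x in atTop, a * tail μ x ≤ tail μ (x + t) := by
  refine ⟨Real.exp (γ * -t) / 2, by positivity, ?_⟩
  filter_upwards [(h (-t)).eventually (eventually_gt_nhds (half_lt_self (Real.exp_pos _)))]
    with x hx
  rw [sub_neg_eq_add, lt_div_iff₀ (h.tail_pos x)] at hx
  exact hx.le

lemma MemOS.exists_pos_eventually_tail_mconv_le (h : MemOS μ)
    (hpos : ∀ x, 0 < tail μ x) : ∃ C > 0, ∀ᶠ x in atTop, tail (mconv μ μ) x ≤ C * tail μ x := by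
  obtain ⟨C, hC⟩ := h
  refine ⟨max C 1, by positivity, ?_⟩
  filter_upwards [eventually_map.mp hC] with x hx
  rw [div_le_iff₀ (hpos x)] at hx
  exact hx.trans (mul_le_mul_of_nonneg_right (le_max_left _ _) (hpos x).le)

lemma exists_pos_eventually_mul_tail_mconv_self_le [IsProbabilityMeasure μ] {γ : ℝ}
    (hL : MemL γ (mconv μ μ)) (hOS : MemOS μ) (c : ℝ) :
    ∃ δ > 0, ∀ᶠ x in atTop, δ * tail (mconv μ μ) x ≤ tail μ (x + c) := by
  have hpos : ∀ x, 0 < tail μ x := fun x => by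
    linarith [hL.tail_pos (x + x), tail_mconv_add_le (μ := μ) (ν := μ) x x]
  obtain ⟨a, ha, hLa⟩ := hL.exists_pos_eventually_mul_tail_le c
  obtain ⟨C, hC, hOSC⟩ := hOS.exists_pos_eventually_tail_mconv_le hpos
  refine ⟨a / C, by positivity, ?_⟩
  filter_upwards [hLa, (tendsto_atTop_add_const_right _ c tendsto_id).eventually hOSC]
    with x hxa hxC
  rw [div_mul_eq_mul_div, div_le_iff₀ hC, mul_comm _ C]
  exact hxa.trans hxC

end Tail

lemma limsup_limsup_le_of_eventually_le {α β : Type*} {l : Filter α} {l' : Filter β}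
    [l.NeBot] [l'.NeBot] {f : α → β → ℝ} {a b : ℝ} (hf : ∀ k x, a ≤ f k x)
    (h : ∀ᶠ k in l, ∀ᶠ x in l', f k x ≤ b) : limsup (fun k => limsup (f k) l') l ≤ b := by
  refine limsup_le_of_le (isCoboundedUnder_le_of_eventually_le l (x := a) (h.mono fun k hk => ?_))
    (h.mono fun k hk => limsup_le_of_le (isCoboundedUnder_le_of_le l' (hf k)) hk)
  exact le_limsup_of_frequently_le (Eventually.of_forall (hf k)).frequently ⟨b, hk⟩

theorem stmt8_general (c : ℝ) (F : Measure ℝ) [IsProbabilityMeasure F]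
    (hs : F (Set.Iio (-c)) = 0) (γ : ℝ)
    (hL2 : MemL γ (mconv F F)) (hOS : MemOS F) :
    Filter.limsup (fun k : ℝ =>
      Filter.limsup (fun x : ℝ =>
        (∫ y in Set.Ioc k (x - k), tail F (x - y) ∂F) / tail (mconv F F) x) Filter.atTop)
      Filter.atTop < 1 := by
  obtain ⟨δ, hδ, hδx⟩ := exists_pos_eventually_mul_tail_mconv_self_le hL2 hOS c
  have hmass : ∀ᶠ k in atTop, 1 / 2 ≤ F.real (Iic k) := by
    have h := (ENNReal.tendsto_toReal (measure_ne_top F univ)).comp (tendsto_measure_Iic_atTop F)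
    rw [measure_univ, ENNReal.toReal_one] at h
    exact h.eventually (eventually_ge_nhds (by norm_num))
  refine (limsup_limsup_le_of_eventually_le (a := 0) (b := 1 - δ / 2) (fun k x => ?_) ?_).trans_lt
    (by linarith)
  · exact div_nonneg (integral_nonneg fun _ => tail_nonneg _) (tail_nonneg x)
  filter_upwards [hmass] with k hk
  filter_upwards [hδx] with x hx
  rw [div_le_iff₀ (hL2.tail_pos x)]
  linarith [setIntegral_Ioc_tail_sub_le (ν := F) hs k x,
    mul_le_mul_of_nonneg_left hk (tail_nonneg (μ := F) (x + c))]

theorem stmt8 (c : ℝ) (hc : 0 ≤ c) (F : Measure ℝ) [IsProbabilityMeasure F]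
    (hs : F (Set.Iio (-c)) = 0) (γ : ℝ) (hγ : 0 ≤ γ)
    (hm : MeasureTheory.Integrable (fun y => Real.exp (γ * y)) F)
    (hL2 : MemL γ (mconv F F)) (hOS : MemOS F) :
    Filter.limsup (fun k : ℝ =>
      Filter.limsup (fun x : ℝ =>
        (∫ y in Set.Ioc k (x - k), tail F (x - y) ∂F) / tail (mconv F F) x) Filter.atTop)
      Filter.atTop < 1 :=
  stmt8_general c F hs γ hL2 hOS
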